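/- If β ≡ 0, then the C¹ coupling condition α^{(R)}(v) D_u g^{(L)}(0,v) = α^{(L)}(v) D_u g^{(R)}(0,v) together with coprimality of α^{(L)}, α^{(R)} (degrees ≤ 1) implies that there is a function g₁ with D_u g^{(S)}(0,v) = α^{(S)}(v) g₁(v) for S ∈ {L,R}, and if D_u g^{(S)}(0,·) are splines in S(T^{p,r}_k,[0,1]) then g₁ ∈ S(T^{p−d_α, r}_k,[0,1]). -/

import Mathlib

/-!
On each knot interval the traces are polynomials `PL`, `PR` with `αR * PL = αL * PR`, so
coprimality gives `PL = αL * q`, `PR = αR * q` for a single polynomial `q` per piece, of degree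
at most `p - d_α`. At a knot `τ` one of `αL`, `αR` does not vanish, and multiplying by a
polynomial that does not vanish at `τ` leaves the order of vanishing at `τ` unchanged; hence the
`C^r` matching of `α * q` across the knot passes to `q`. Gluing the pieces `q` gives `g₁`.
-/

open Polynomial

/-- The extended knot sequence: `kn 0 = 0`, `kn i = τ i` for `1 ≤ i ≤ k`, and `kn i = 1`
for `i > k`. -/
noncomputable def kn (k : ℕ) (τ : ℕ → ℝ) (i : ℕ) : ℝ :=
  if i = 0 then 0 else if i ≤ k then τ i else 1

/-- Valid interior knots: `0 < τ 1 < τ 2 < ⋯ < τ k < 1`. -/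
def ValidKnots (k : ℕ) (τ : ℕ → ℝ) : Prop :=
  (∀ i, 1 ≤ i → i ≤ k → 0 < τ i ∧ τ i < 1) ∧
  (∀ i j, 1 ≤ i → i < j → j ≤ k → τ i < τ j)

/-- `f : ℝ → ℝ` is a spline of degree `p` with `C^s` smoothness at the `k` interior knots
`τ 1 < ⋯ < τ k` of the open knot vector `T^{p,s}_k` on `[0,1]`:  on each piece
`[kn i, kn (i+1)]` it coincides with a polynomial `P i` of degree at most `p`, the first and
last pieces being extended polynomially beyond `0` and `1`, and at each interior knot the
derivatives of the adjacent polynomial pieces agree up to order `s`. -/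
def SplinePred (p s k : ℕ) (τ : ℕ → ℝ) (f : ℝ → ℝ) : Prop :=
  ∃ P : ℕ → Polynomial ℝ,
    (∀ i, (P i).natDegree ≤ p) ∧
    (∀ i, i ≤ k → ∀ x ∈ Set.Icc (kn k τ i) (kn k τ (i + 1)), f x = (P i).eval x) ∧
    (∀ x : ℝ, x ≤ 0 → f x = (P 0).eval x) ∧
    (∀ x : ℝ, 1 ≤ x → f x = (P k).eval x) ∧
    (∀ i, 1 ≤ i → i ≤ k → ∀ j, j ≤ s →
      (derivative^[j] (P (i - 1))).eval (τ i) = (derivative^[j] (P i)).eval (τ i))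

/-- The spline space `S(T^{p,s}_k, [0,1])` as a subspace of `ℝ → ℝ`. -/
noncomputable def SplineSpace (p s k : ℕ) (τ : ℕ → ℝ) : Submodule ℝ (ℝ → ℝ) where
  carrier := {f | SplinePred p s k τ f}
  add_mem' := by
    rintro a b ⟨P, hPd, hPp, hPl, hPr, hPs⟩ ⟨Q, hQd, hQp, hQl, hQr, hQs⟩
    refine ⟨fun i => P i + Q i, fun i => ?_, fun i hi x hx => ?_, fun x hx => ?_,
      fun x hx => ?_, fun i h1 h2 j hj => ?_⟩
    · exact le_trans (Polynomial.natDegree_add_le _ _) (max_le (hPd i) (hQd i))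
    · simp [Pi.add_apply, hPp i hi x hx, hQp i hi x hx]
    · simp [Pi.add_apply, hPl x hx, hQl x hx]
    · simp [Pi.add_apply, hPr x hx, hQr x hx]
    · have hadd : ∀ (j : ℕ) (P Q : Polynomial ℝ),
          derivative^[j] (P + Q) = derivative^[j] P + derivative^[j] Q := by
        intro j
        induction j with
        | zero => simp
        | succ n ih => intro P Q; simp [Function.iterate_succ_apply, derivative_add, ih]
      simp [hadd, hPs i h1 h2 j hj, hQs i h1 h2 j hj]
  zero_mem' :=
    ⟨fun _ => 0, by simp, by simp, by simp, by simp, by simp⟩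
  smul_mem' := by
    rintro c a ⟨P, hPd, hPp, hPl, hPr, hPs⟩
    refine ⟨fun i => Polynomial.C c * P i, fun i => ?_, fun i hi x hx => ?_, fun x hx => ?_,
      fun x hx => ?_, fun i h1 h2 j hj => ?_⟩
    · exact le_trans (Polynomial.natDegree_C_mul_le _ _) (hPd i)
    · simp [Pi.smul_apply, smul_eq_mul, hPp i hi x hx]
    · simp [Pi.smul_apply, smul_eq_mul, hPl x hx]
    · simp [Pi.smul_apply, smul_eq_mul, hPr x hx]
    · simp [Polynomial.iterate_derivative_C_mul, hPs i h1 h2 j hj]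

theorem IsCoprime.exists_eq_mul_of_mul_eq {R : Type*} [CommRing R] {a b x y : R}
    (h : IsCoprime a b) (hxy : b * x = a * y) : ∃ q, x = a * q ∧ y = b * q := by
  obtain ⟨u, v, huv⟩ := h
  refine ⟨u * x + v * y, ?_, ?_⟩
  · linear_combination (-x) * huv + v * hxy
  · linear_combination (-y) * huv - u * hxy

theorem IsCoprime.eval_ne_zero_or {R : Type*} [CommRing R] [Nontrivial R] {a b : R[X]}
    (h : IsCoprime a b) (t : R) : a.eval t ≠ 0 ∨ b.eval t ≠ 0 :=
  (h.map (evalRingHom t)).ne_zero_or_ne_zero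

namespace Polynomial

theorem eq_of_eqOn_Icc {R : Type*} [CommRing R] [IsDomain R] [LinearOrder R] [DenselyOrdered R]
    {a b : R} (hab : a < b) {P Q : R[X]}
    (h : Set.EqOn P.eval Q.eval (Set.Icc a b)) : P = Q :=
  eq_of_infinite_eval_eq P Q ((Set.Icc_infinite hab).mono h)

theorem natDegree_le_sub_max_of_isCoprime {R : Type*} [CommRing R] [IsDomain R]
    {a b q : R[X]} {p : ℕ} (hab : IsCoprime a b)
    (ha : (a * q).natDegree ≤ p) (hb : (b * q).natDegree ≤ p) :
    q.natDegree ≤ p - max a.natDegree b.natDegree := by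
  rcases eq_or_ne q 0 with rfl | hq
  · simp
  have hdeg : ∀ c : R[X], c ≠ 0 → (c * q).natDegree ≤ p →
      c.natDegree + q.natDegree ≤ p :=
    fun c hc h => natDegree_mul hc hq ▸ h
  rcases eq_or_ne a 0 with rfl | ha0
  · have := hdeg b (isCoprime_zero_left.mp hab).ne_zero hb
    simp only [natDegree_zero]
    omega
  rcases eq_or_ne b 0 with rfl | hb0
  · have := hdeg a ha0 ha
    simp only [natDegree_zero]
    omega
  have := hdeg a ha0 ha
  have := hdeg b hb0 hb
  omega

variable {R : Type*} [CommRing R] [IsDomain R] [CharZero R]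

theorem isRoot_iterate_derivative_of_mul {α F : R[X]} {t : R} {s : ℕ} (hα : ¬α.IsRoot t)
    (h : ∀ j ≤ s, (derivative^[j] (α * F)).IsRoot t) :
    ∀ j ≤ s, (derivative^[j] F).IsRoot t := by
  rcases eq_or_ne F 0 with rfl | hF
  · simp
  have hαF : α * F ≠ 0 := mul_ne_zero (by rintro rfl; simp at hα) hF
  rwa [← lt_rootMultiplicity_iff_isRoot_iterate_derivative hαF, rootMultiplicity_mul hαF,
    rootMultiplicity_eq_zero hα, zero_add,
    lt_rootMultiplicity_iff_isRoot_iterate_derivative hF] at h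

theorem iterate_derivative_eval_eq_of_mul {α P Q : R[X]} {t : R} {s : ℕ} (hα : α.eval t ≠ 0)
    (h : ∀ j ≤ s, (derivative^[j] (α * P)).eval t = (derivative^[j] (α * Q)).eval t) :
    ∀ j ≤ s, (derivative^[j] P).eval t = (derivative^[j] Q).eval t := by
  have hsub := isRoot_iterate_derivative_of_mul (F := P - Q) hα fun j hj => by
    rw [IsRoot, mul_sub, iterate_derivative_sub, eval_sub, h j hj, sub_self]
  intro j hj
  rw [← sub_eq_zero, ← eval_sub, ← iterate_derivative_sub]
  exact hsub j hj

end Polynomial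

section Knots

variable {k : ℕ} {τ : ℕ → ℝ}

@[simp] theorem kn_zero : kn k τ 0 = 0 := if_pos rfl

theorem kn_mem_Icc (hτ : ValidKnots k τ) (i : ℕ) : kn k τ i ∈ Set.Icc (0 : ℝ) 1 := by
  unfold kn
  split_ifs with h0 hk
  · simp
  · exact ⟨(hτ.1 i (by omega) hk).1.le, (hτ.1 i (by omega) hk).2.le⟩
  · simp

theorem kn_strictMonoOn (hτ : ValidKnots k τ) : StrictMonoOn (kn k τ) (Set.Iic (k + 1)) := by
  intro a _ b hb hab
  simp only [Set.mem_Iic] at hb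
  unfold kn
  split_ifs
  all_goals first
    | omega
    | exact zero_lt_one
    | exact (hτ.1 b (by omega) ‹b ≤ k›).1
    | exact hτ.2 a b (by omega) hab ‹b ≤ k›
    | exact (hτ.1 a (by omega) ‹a ≤ k›).2

theorem kn_lt_kn_succ (hτ : ValidKnots k τ) {i : ℕ} (hi : i ≤ k) :
    kn k τ i < kn k τ (i + 1) :=
  kn_strictMonoOn hτ (by simp only [Set.mem_Iic]; omega) (by simp only [Set.mem_Iic]; omega)
    (Nat.lt_succ_self i)

theorem Icc_kn_subset_Icc (hτ : ValidKnots k τ) (i : ℕ) :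
    Set.Icc (kn k τ i) (kn k τ (i + 1)) ⊆ Set.Icc 0 1 :=
  Set.Icc_subset_Icc (kn_mem_Icc hτ i).1 (kn_mem_Icc hτ (i + 1)).2

variable (k τ) in
noncomputable def pieceIndex (x : ℝ) : ℕ :=
  Nat.findGreatest (fun i => kn k τ i ≤ x) k

variable (k τ) in
theorem pieceIndex_le (x : ℝ) : pieceIndex k τ x ≤ k :=
  Nat.findGreatest_le k

variable (k τ) in
theorem mem_Icc_kn_pieceIndex {x : ℝ} (hx : x ∈ Set.Icc (0 : ℝ) 1) :
    x ∈ Set.Icc (kn k τ (pieceIndex k τ x)) (kn k τ (pieceIndex k τ x + 1)) := by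
  refine ⟨Nat.findGreatest_spec (P := (kn k τ · ≤ x)) (Nat.zero_le k) (by simpa using hx.1),
    le_of_not_gt fun hlt => ?_⟩
  rcases Nat.lt_or_ge (pieceIndex k τ x) k with hk | hk
  · exact Nat.findGreatest_is_greatest (Nat.lt_succ_self _) hk hlt.le
  · have : kn k τ (pieceIndex k τ x + 1) = 1 := by simp [kn]; omega
    linarith [hx.2]

theorem pieceIndex_of_nonpos (hτ : ValidKnots k τ) {x : ℝ} (hx : x ≤ 0) :
    pieceIndex k τ x = 0 :=
  Nat.findGreatest_eq_zero_iff.mpr fun i hi hik hle => by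
    have := kn_strictMonoOn hτ (by simp) (by simp only [Set.mem_Iic]; omega) hi
    rw [kn_zero] at this
    linarith

theorem pieceIndex_of_one_le (hτ : ValidKnots k τ) {x : ℝ} (hx : 1 ≤ x) :
    pieceIndex k τ x = k :=
  Nat.findGreatest_eq ((kn_mem_Icc hτ k).2.trans hx)

end Knots

variable (k τ) in
noncomputable def piecewisePoly (Q : ℕ → ℝ[X]) (x : ℝ) : ℝ :=
  (Q (pieceIndex k τ x)).eval x

section Piecewise

variable {k : ℕ} {τ : ℕ → ℝ} {Q : ℕ → ℝ[X]}

theorem piecewisePoly_eq_eval (hτ : ValidKnots k τ)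
    (hQ : ∀ i, 1 ≤ i → i ≤ k → (Q (i - 1)).eval (τ i) = (Q i).eval (τ i))
    {i : ℕ} (hi : i ≤ k) {x : ℝ} (hx : x ∈ Set.Icc (kn k τ i) (kn k τ (i + 1))) :
    piecewisePoly k τ Q x = (Q i).eval x := by
  set m := pieceIndex k τ x
  have hmk : m ≤ k := pieceIndex_le k τ x
  have him : i ≤ m := Nat.le_findGreatest (P := fun i => kn k τ i ≤ x) hi hx.1
  have hmx : kn k τ m ≤ x := (mem_Icc_kn_pieceIndex k τ (Icc_kn_subset_Icc hτ i hx)).1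
  show (Q m).eval x = (Q i).eval x
  rcases him.eq_or_lt with rfl | hlt
  · rfl
  -- `x` lies in two pieces only if it is their common knot, where `Q` is continuous
  have hm : m = i + 1 := by
    by_contra hne
    have := kn_strictMonoOn hτ (a := i + 1) (b := m) (by simp only [Set.mem_Iic]; omega)
      (by simp only [Set.mem_Iic]; omega) (by omega)
    linarith [hx.2]
  rw [hm] at hmk hmx ⊢
  have hknot : x = τ (i + 1) := by
    have := le_antisymm hx.2 hmx
    simpa only [kn, hmk, if_neg (Nat.succ_ne_zero i), if_true] using this
  rw [hknot]
  exact (hQ (i + 1) (Nat.le_add_left 1 i) hmk).symm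

theorem splinePred_piecewisePoly {p s : ℕ} (hτ : ValidKnots k τ)
    (hdeg : ∀ i ≤ k, (Q i).natDegree ≤ p)
    (hsmooth : ∀ i, 1 ≤ i → i ≤ k → ∀ j, j ≤ s →
      (derivative^[j] (Q (i - 1))).eval (τ i) = (derivative^[j] (Q i)).eval (τ i)) :
    SplinePred p s k τ (piecewisePoly k τ Q) := by
  have hcont i h1 h2 : (Q (i - 1)).eval (τ i) = (Q i).eval (τ i) :=
    hsmooth i h1 h2 0 (Nat.zero_le s)
  refine ⟨fun i => Q (min i k), fun i => hdeg _ (min_le_right i k), fun i hi x hx => ?_,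
    fun x hx => ?_, fun x hx => ?_, fun i h1 h2 j hj => ?_⟩
  · dsimp only
    rw [min_eq_left hi]
    exact piecewisePoly_eq_eval hτ hcont hi hx
  · simp [piecewisePoly, pieceIndex_of_nonpos hτ hx]
  · simp [piecewisePoly, pieceIndex_of_one_le hτ hx]
  · simpa [min_eq_left (by omega : i - 1 ≤ k), min_eq_left h2]
      using hsmooth i h1 h2 j hj

end Piecewise

theorem stmt18_general (p r k : ℕ) (τ : ℕ → ℝ) (hτ : ValidKnots k τ)
    (αL αR : Polynomial ℝ)
    (hcop : IsCoprime αL αR)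
    (fL fR : ℝ → ℝ)
    (hfL : SplinePred p r k τ fL) (hfR : SplinePred p r k τ fR)
    (heq : ∀ v ∈ Set.Icc (0:ℝ) 1, αR.eval v * fL v = αL.eval v * fR v) :
    ∃ g₁ : ℝ → ℝ,
      (∀ v ∈ Set.Icc (0:ℝ) 1, fL v = αL.eval v * g₁ v ∧ fR v = αR.eval v * g₁ v) ∧
      SplinePred (p - max αL.natDegree αR.natDegree) r k τ g₁ := by
  obtain ⟨PL, hPLdeg, hPL, -, -, hPLsmooth⟩ := hfL
  obtain ⟨PR, hPRdeg, hPR, -, -, hPRsmooth⟩ := hfR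
  have hpieces i (hi : i ≤ k) : αR * PL i = αL * PR i :=
    eq_of_eqOn_Icc (kn_lt_kn_succ hτ hi) fun x hx => by
      simpa only [eval_mul, hPL i hi x hx, hPR i hi x hx] using
        heq x (Icc_kn_subset_Icc hτ i hx)
  choose! Q hQ using fun i (hi : i ≤ k) => hcop.exists_eq_mul_of_mul_eq (hpieces i hi)
  refine ⟨piecewisePoly k τ Q, fun v hv => ?_, splinePred_piecewisePoly hτ
    (fun i hi => natDegree_le_sub_max_of_isCoprime hcop ((hQ i hi).1 ▸ hPLdeg i)
      ((hQ i hi).2 ▸ hPRdeg i)) fun i h1 h2 => ?_⟩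
  · have hm := pieceIndex_le k τ v
    have hv' := mem_Icc_kn_pieceIndex k τ hv
    rw [hPL _ hm v hv', hPR _ hm v hv', (hQ _ hm).1, (hQ _ hm).2, eval_mul, eval_mul]
    exact ⟨rfl, rfl⟩
  · have hi : i - 1 ≤ k := by omega
    rcases hcop.eval_ne_zero_or (τ i) with hL | hR
    · refine iterate_derivative_eval_eq_of_mul hL ?_
      simpa only [← (hQ i h2).1, ← (hQ (i - 1) hi).1] using hPLsmooth i h1 h2
    · refine iterate_derivative_eval_eq_of_mul hR ?_
      simpa only [← (hQ i h2).2, ← (hQ (i - 1) hi).2] using hPRsmooth i h1 h2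

/-- If `β ≡ 0`, the C¹ coupling condition `αR(v)·D_u g^{(L)}(0,v) = αL(v)·D_u g^{(R)}(0,v)`
(here `fL, fR` denote the spline traces `D_u g^{(L)}(0,·), D_u g^{(R)}(0,·) ∈ S(T^{p,r}_k)`)
together with coprimality of the degree-≤1 polynomials `αL, αR` implies that there is a
function `g₁` with `fS = α^{(S)}·g₁` on `[0,1]` for `S ∈ {L,R}`, and
`g₁ ∈ S(T^{p−d_α,r}_k, [0,1])` where `d_α = max(deg αL, deg αR)`. -/
theorem stmt18 (p r k : ℕ) (τ : ℕ → ℝ) (hτ : ValidKnots k τ)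
    (hr1 : 1 ≤ r) (hrp : r < p)
    (αL αR : Polynomial ℝ)
    (hαL : αL.natDegree ≤ 1) (hαR : αR.natDegree ≤ 1)
    (hcop : IsCoprime αL αR)
    (fL fR : ℝ → ℝ)
    (hfL : SplinePred p r k τ fL) (hfR : SplinePred p r k τ fR)
    (heq : ∀ v ∈ Set.Icc (0:ℝ) 1, αR.eval v * fL v = αL.eval v * fR v) :
    ∃ g₁ : ℝ → ℝ,
      (∀ v ∈ Set.Icc (0:ℝ) 1, fL v = αL.eval v * g₁ v ∧ fR v = αR.eval v * g₁ v) ∧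
      SplinePred (p - max αL.natDegree αR.natDegree) r k τ g₁ :=
  stmt18_general p r k τ hτ αL αR hcop fL fR hfL hfR heq
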